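/- arXiv:1503.06173 — 2 statements merged into one kernel-verified Lean document; each statement's English description precedes it below -/
import Mathlib

section
/- For nonnegative integers n and m with m \ge 1, J_n^m = \sum_{s=0}^{n} \binom{n}{s} J_s^0 \, J_{n-s}^{m-1}, where J_n^m = \sum_{s=0}^{n} S(n,s)\, s! \binom{m+s}{m}. -/
open Finset

/-- Stirling numbers of the second kind. -/
def stirling2 : ℕ → ℕ → ℕ
  | 0, 0 => 1
  | 0, _ + 1 => 0
  | _ + 1, 0 => 0
  | n + 1, k + 1 => (k + 1) * stirling2 n (k + 1) + stirling2 n k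

/-- Fubini numbers: number of preferential arrangements of an n-set. -/
def fubini (n : ℕ) : ℕ := ∑ s ∈ range (n + 1), stirling2 n s * s.factorial

/-- Number of barred preferential arrangements of an n-set with m bars. -/
def barred (n m : ℕ) : ℕ :=
  ∑ s ∈ range (n + 1), stirling2 n s * s.factorial * (m + s).choose m

/-- Number of restricted barred preferential arrangements. -/
def restrictedBarred (n m : ℕ) : ℕ :=
  ∑ s ∈ range (n + 1), n.choose s * m ^ s * fubini (n - s)

/-!
Write `F(n, k) = S(n, k) k!` for the number of ordered partitions of an `n`-set into `k` blocks.
Choosing which elements go to the first `a` blocks gives the binomial convolution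
`∑ₖ C(n, k) F(k, a) F(n - k, b) = F(n, a + b)`, which also follows by induction on `n` from the
Stirling recurrence. Summing over `a` yields `∑ₖ C(n, k) J_k^0 F(n - k, b) = ∑ₐ F(n, a + b)`
for every `b`. On the other side, the hockey-stick identity
`C(m + t, m) = ∑_{b ≤ t} C(m - 1 + b, m - 1)` expresses `J_n^m` as the same double sum
`∑_{a, b} F(n, a + b) C(m - 1 + b, m - 1)`.
-/

lemma stirling2_eq_stirlingSecond : ∀ n k, stirling2 n k = Nat.stirlingSecond n k
  | 0, 0 | 0, _ + 1 | _ + 1, 0 => rfl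
  | n + 1, k + 1 => by
    rw [Nat.stirlingSecond_succ_succ, ← stirling2_eq_stirlingSecond n (k + 1),
      ← stirling2_eq_stirlingSecond n k]
    rfl

def orderedPartitions (n k : ℕ) : ℕ := stirling2 n k * k.factorial

lemma orderedPartitions_eq_zero_of_lt {n k : ℕ} (h : n < k) : orderedPartitions n k = 0 := by
  rw [orderedPartitions, stirling2_eq_stirlingSecond, Nat.stirlingSecond_eq_zero_of_lt h, zero_mul]

lemma orderedPartitions_zero_left (k : ℕ) : orderedPartitions 0 k = if k = 0 then 1 else 0 := by
  cases k <;> simp [orderedPartitions, stirling2]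

lemma orderedPartitions_succ_left (n k : ℕ) :
    orderedPartitions (n + 1) k = k * (orderedPartitions n k + orderedPartitions n (k - 1)) := by
  rcases k with _ | k
  · simp [orderedPartitions, stirling2]
  · simp only [orderedPartitions, stirling2, Nat.factorial_succ, Nat.add_sub_cancel]
    ring

lemma sum_antidiagonal_choose_mul_orderedPartitions_succ (n a b : ℕ) :
    ∑ ij ∈ antidiagonal n,
        n.choose ij.1 * orderedPartitions ij.1 a * orderedPartitions (ij.2 + 1) b =
      b * (∑ ij ∈ antidiagonal n,
          n.choose ij.1 * orderedPartitions ij.1 a * orderedPartitions ij.2 b +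
        ∑ ij ∈ antidiagonal n,
          n.choose ij.1 * orderedPartitions ij.1 a * orderedPartitions ij.2 (b - 1)) := by
  simp only [orderedPartitions_succ_left, mul_add, sum_add_distrib, mul_sum]
  congr 1 <;> exact sum_congr rfl fun _ _ => by ring

theorem sum_antidiagonal_choose_mul_orderedPartitions (n a b : ℕ) :
    ∑ ij ∈ antidiagonal n, n.choose ij.1 * orderedPartitions ij.1 a * orderedPartitions ij.2 b =
      orderedPartitions n (a + b) := by
  induction n generalizing a b with
  | zero => cases a <;> cases b <;> simp [orderedPartitions_zero_left]
  | succ n ih =>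
    -- the factor `b` absorbs the case `b = 0`, where `b - 1` truncates
    have ih_pred (a b : ℕ) : b * ∑ ij ∈ antidiagonal n,
        n.choose ij.1 * orderedPartitions ij.1 a * orderedPartitions ij.2 (b - 1) =
        b * orderedPartitions n (a + b - 1) := by
      rcases b with _ | b
      · simp
      · rw [ih, Nat.add_sub_cancel, Nat.add_succ_sub_one]
    have swap : ∑ ij ∈ antidiagonal n,
          n.choose ij.2 * orderedPartitions (ij.1 + 1) a * orderedPartitions ij.2 b =
        ∑ ij ∈ antidiagonal n,
          n.choose ij.1 * orderedPartitions ij.1 b * orderedPartitions (ij.2 + 1) a := by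
      rw [← Nat.sum_antidiagonal_swap]
      exact sum_congr rfl fun _ _ => by simp only [Prod.fst_swap, Prod.snd_swap]; ring
    have pascal := sum_antidiagonal_choose_succ_mul
      (fun i j => orderedPartitions i a * orderedPartitions j b) n
    simp only [Nat.cast_id, ← mul_assoc] at pascal
    rw [pascal, swap, sum_antidiagonal_choose_mul_orderedPartitions_succ,
      sum_antidiagonal_choose_mul_orderedPartitions_succ, mul_add, mul_add, ih_pred, ih_pred,
      ih, ih, orderedPartitions_succ_left, add_comm b a]
    ring

lemma barred_eq_sum_range_of_le {n N : ℕ} (m : ℕ) (h : n ≤ N) :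
    barred n m = ∑ s ∈ range (N + 1), orderedPartitions n s * (m + s).choose m :=
  sum_subset (f := fun s => orderedPartitions n s * (m + s).choose m)
    (range_subset_range.2 (by omega)) fun s _ hs => by
      rw [orderedPartitions_eq_zero_of_lt (by simp at hs; omega), zero_mul]

lemma sum_antidiagonal_choose_mul_barred_zero_mul (n b : ℕ) :
    ∑ ij ∈ antidiagonal n, n.choose ij.1 * barred ij.1 0 * orderedPartitions ij.2 b =
      ∑ a ∈ range (n + 1), orderedPartitions n (a + b) := by
  have fubini_eq (ij : ℕ × ℕ) (h : ij ∈ antidiagonal n) :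
      barred ij.1 0 = ∑ a ∈ range (n + 1), orderedPartitions ij.1 a := by
    simp [barred_eq_sum_range_of_le 0 (HasAntidiagonal.antidiagonal.fst_le h)]
  rw [sum_congr rfl fun ij h => by rw [fubini_eq ij h]]
  simp_rw [mul_sum, sum_mul]
  rw [sum_comm]
  simp_rw [← sum_antidiagonal_choose_mul_orderedPartitions]

lemma barred_succ_right (n m : ℕ) :
    barred n (m + 1) = ∑ b ∈ range (n + 1),
      (m + b).choose m * ∑ a ∈ range (n + 1), orderedPartitions n (a + b) := by
  calc barred n (m + 1)
      = ∑ t ∈ range (n + 1), ∑ b ∈ range (t + 1),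
          orderedPartitions n t * (b + m).choose m := by
        rw [barred_eq_sum_range_of_le (m + 1) le_rfl]
        refine sum_congr rfl fun t _ => ?_
        rw [← mul_sum, Nat.sum_range_add_choose, add_right_comm, add_comm t]
    _ = ∑ b ∈ range (n + 1), ∑ t ∈ Ico b (n + 1),
          orderedPartitions n t * (b + m).choose m := by
        simp_rw [range_eq_Ico]
        exact (sum_Ico_Ico_comm 0 (n + 1) fun b t => orderedPartitions n t * (b + m).choose m).symm
    _ = _ := by
        refine sum_congr rfl fun b hb => ?_
        rw [← sum_mul, mul_comm, add_comm b m, sum_Ico_eq_sum_range]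
        simp_rw [add_comm b]
        congr 1
        refine sum_subset (range_subset_range.2 (by omega)) fun a _ ha => ?_
        simp at ha hb
        exact orderedPartitions_eq_zero_of_lt (by omega)

theorem barred_recurrence (n m : ℕ) (hm : 1 ≤ m) :
    barred n m = ∑ s ∈ range (n + 1), n.choose s * barred s 0 * barred (n - s) (m - 1) := by
  obtain ⟨m, rfl⟩ := Nat.exists_eq_add_of_le' hm
  rw [Nat.add_sub_cancel]
  calc barred n (m + 1)
      = ∑ b ∈ range (n + 1),
          (m + b).choose m * ∑ a ∈ range (n + 1), orderedPartitions n (a + b) :=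
        barred_succ_right n m
    _ = ∑ b ∈ range (n + 1), ∑ ij ∈ antidiagonal n,
          n.choose ij.1 * barred ij.1 0 * (orderedPartitions ij.2 b * (m + b).choose m) := by
        refine sum_congr rfl fun b _ => ?_
        rw [← sum_antidiagonal_choose_mul_barred_zero_mul, mul_sum]
        exact sum_congr rfl fun _ _ => by ring
    _ = ∑ ij ∈ antidiagonal n, n.choose ij.1 * barred ij.1 0 * barred ij.2 m := by
        rw [sum_comm]
        refine sum_congr rfl fun ij h => ?_
        rw [barred_eq_sum_range_of_le m (HasAntidiagonal.antidiagonal.snd_le h), mul_sum]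
    _ = _ := Nat.sum_antidiagonal_eq_sum_range_succ
        (fun i j => n.choose i * barred i 0 * barred j m) n
end

section
/- For every nonnegative integer n, 2 I_n^1 - 1 = I_n^2, where I_n^m = \sum_{s=0}^{n} \binom{n}{s} m^s J_{n-s}. -/
open Finset

/-!
With `J(x) = ∑ J_n xⁿ/n!`, the numbers `I_n^m` have exponential generating function `e^{mx} J(x)`,
and the Fubini recurrence says `(2 - eˣ) J(x) = 1`. Hence `2 eˣ J(x) - e^{2x} J(x) = eˣ`, whose
coefficients are all `1`. On coefficients, multiplication by `e^{ax}` is the binomial transform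
`f ↦ (n ↦ ∑ₛ C(n,s) aˢ f(n - s))`, so the argument runs entirely on finite binomial sums.
-/

open Nat

theorem stirling2_eq_stirlingSecond_s11 : stirling2 = stirlingSecond := by
  funext n k
  induction n generalizing k with
  | zero => cases k <;> rfl
  | succ n ih => cases k <;> simp [stirling2, stirlingSecond_succ_succ, ih]

theorem Nat.stirlingSecond_succ_succ_eq_sum_choose (n k : ℕ) :
    stirlingSecond (n + 1) (k + 1) = ∑ j ∈ range (n + 1), n.choose j * stirlingSecond j k := by
  induction n generalizing k with
  | zero => simp [stirlingSecond_succ_succ]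
  | succ n ih =>
    have hpascal := sum_choose_succ_mul (R := ℕ) (fun j _ => stirlingSecond j k) n
    simp only [Nat.cast_id] at hpascal
    rw [hpascal, ← ih]
    cases k with
    | zero => simp [stirlingSecond_succ_succ]
    | succ k =>
      simp only [stirlingSecond_succ_succ _ k, mul_add, sum_add_distrib, mul_left_comm _ (k + 1),
        ← mul_sum]
      rw [← ih, ← ih, stirlingSecond_succ_succ (n + 1)]
      ring

theorem fubini_eq_sum_range_of_le {n m : ℕ} (h : n ≤ m) :
    fubini n = ∑ t ∈ range (m + 1), stirlingSecond n t * t ! := by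
  rw [fubini, stirling2_eq_stirlingSecond_s11]
  refine sum_subset (range_subset_range.2 (by omega)) fun t _ ht => ?_
  rw [stirlingSecond_eq_zero_of_lt (by simpa using ht), zero_mul]

theorem sum_choose_mul_fubini (n : ℕ) :
    ∑ k ∈ range (n + 1), n.choose k * fubini k
      = ∑ t ∈ range (n + 1), stirlingSecond (n + 1) (t + 1) * t ! := by
  calc ∑ k ∈ range (n + 1), n.choose k * fubini k
      = ∑ k ∈ range (n + 1), ∑ t ∈ range (n + 1), n.choose k * stirlingSecond k t * t ! := by
        refine sum_congr rfl fun k hk => ?_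
        rw [fubini_eq_sum_range_of_le (mem_range_succ_iff.1 hk), mul_sum]
        simp only [mul_assoc]
    _ = ∑ t ∈ range (n + 1), stirlingSecond (n + 1) (t + 1) * t ! := by
        rw [sum_comm]
        simp only [stirlingSecond_succ_succ_eq_sum_choose, sum_mul]

theorem sum_stirlingSecond_succ_succ_mul_factorial (n : ℕ) :
    ∑ t ∈ range (n + 1), stirlingSecond (n + 1) (t + 1) * t ! + stirlingSecond n 0
      = 2 * fubini n := by
  have hsplit : ∀ t, stirlingSecond (n + 1) (t + 1) * t !
      = stirlingSecond n (t + 1) * (t + 1)! + stirlingSecond n t * t ! := fun t => by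
    rw [stirlingSecond_succ_succ, factorial_succ]
    ring
  -- the two halves of the split sum are `J_n`, shifted by one index and missing `S(n,0)`, and `J_n`
  have hshift := sum_range_succ' (fun t => stirlingSecond n t * t !) (n + 1)
  rw [sum_range_succ, stirlingSecond_eq_zero_of_lt (lt_succ_self n), zero_mul, add_zero,
    ← fubini_eq_sum_range_of_le le_rfl, factorial_zero, mul_one] at hshift
  rw [sum_congr rfl fun t _ => hsplit t, sum_add_distrib, add_right_comm, ← hshift,
    ← fubini_eq_sum_range_of_le le_rfl, two_mul]

section BinomialTransform

variable {R : Type*} [CommSemiring R]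

def binomialTransform (a : R) : (ℕ → R) →ₗ[R] ℕ → R where
  toFun f n := ∑ s ∈ range (n + 1), n.choose s * a ^ s * f (n - s)
  map_add' f g := by
    ext n
    simp only [Pi.add_apply, mul_add, sum_add_distrib]
  map_smul' c f := by
    ext n
    simp only [Pi.smul_apply, smul_eq_mul, RingHom.id_apply, mul_sum]
    exact sum_congr rfl fun _ _ => by ring

theorem binomialTransform_apply (a : R) (f : ℕ → R) (n : ℕ) :
    binomialTransform a f n = ∑ s ∈ range (n + 1), n.choose s * a ^ s * f (n - s) := rfl

theorem binomialTransform_single_zero (a : R) (n : ℕ) :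
    binomialTransform a (Pi.single 0 1) n = a ^ n := by
  rw [binomialTransform_apply, sum_eq_single n]
  · simp
  · intro s hs hne
    rw [Pi.single_eq_of_ne (by simp at hs; omega), mul_zero]
  · simp

theorem binomialTransform_one_apply (f : ℕ → R) (n : ℕ) :
    binomialTransform 1 f n = ∑ k ∈ range (n + 1), n.choose k * f k := by
  rw [binomialTransform_apply, ← sum_range_reflect]
  refine sum_congr rfl fun k hk => ?_
  have hkn : k ≤ n := mem_range_succ_iff.1 hk
  rw [one_pow, mul_one, add_tsub_cancel_right, choose_symm hkn, Nat.sub_sub_self hkn]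

theorem binomialTransform_add (a b : R) (f : ℕ → R) :
    binomialTransform (a + b) f = binomialTransform a (binomialTransform b f) := by
  ext n
  calc binomialTransform (a + b) f n
      = ∑ s ∈ range (n + 1), ∑ k ∈ range (s + 1),
          (n.choose k : R) * a ^ k * ((n - k).choose (s - k) * b ^ (s - k) * f (n - s)) := by
        rw [binomialTransform_apply]
        refine sum_congr rfl fun s _ => ?_
        rw [add_pow, mul_sum, sum_mul]
        refine sum_congr rfl fun k hk => ?_
        have hchoose := congrArg (Nat.cast (R := R))
          (choose_mul (n := n) (mem_range_succ_iff.1 hk))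
        push_cast at hchoose
        calc (n.choose s : R) * (a ^ k * b ^ (s - k) * s.choose k) * f (n - s)
            = n.choose s * s.choose k * (a ^ k * b ^ (s - k) * f (n - s)) := by ring
          _ = _ := by rw [hchoose]; ring
    _ = ∑ k ∈ range (n + 1), ∑ s ∈ Ico k (n + 1),
          (n.choose k : R) * a ^ k * ((n - k).choose (s - k) * b ^ (s - k) * f (n - s)) := by
        simp only [range_eq_Ico, sum_Ico_Ico_comm]
    _ = binomialTransform a (binomialTransform b f) n := by
        simp only [binomialTransform_apply, mul_sum]
        refine sum_congr rfl fun k hk => ?_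
        rw [sum_Ico_eq_sum_range, show n + 1 - k = n - k + 1 by simp at hk; omega]
        refine sum_congr rfl fun j _ => ?_
        rw [add_tsub_cancel_left, Nat.sub_add_eq]

end BinomialTransform

theorem binomialTransform_one_fubini :
    binomialTransform 1 fubini + Pi.single 0 1 = 2 • fubini := by
  ext n
  rw [Pi.add_apply, binomialTransform_one_apply]
  simp only [Nat.cast_id]
  have hdelta : (Pi.single 0 1 : ℕ → ℕ) n = stirlingSecond n 0 := by cases n <;> rfl
  rw [sum_choose_mul_fubini, hdelta, sum_stirlingSecond_succ_succ_mul_factorial]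
  rfl

theorem restrictedBarred_eq_binomialTransform (n m : ℕ) :
    restrictedBarred n m = binomialTransform m fubini n := rfl

theorem restricted_one_two (n : ℕ) :
    2 * restrictedBarred n 1 - 1 = restrictedBarred n 2 := by
  suffices restrictedBarred n 2 + 1 = 2 * restrictedBarred n 1 by omega
  calc restrictedBarred n 2 + 1
      = binomialTransform 1 (binomialTransform 1 fubini) n
          + binomialTransform 1 (Pi.single 0 1) n := by
        rw [restrictedBarred_eq_binomialTransform, ← one_add_one_eq_two,
          binomialTransform_add, binomialTransform_single_zero, one_pow]
    _ = 2 * restrictedBarred n 1 := by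
        rw [← Pi.add_apply, ← map_add, binomialTransform_one_fubini, map_nsmul]
        rfl
end
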